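/- arXiv:1801.05798 — 2 statements merged into one kernel-verified Lean document; each statement's English description precedes it below -/
import Mathlib

section
/- In a PET, for a sharp effect p and any map f with codomain the domain of asrt_p, one has im(f) ≤ p if and only if asrt_p ∘ f = f. -/
universe u v

/-- An effect algebra: a set with a partially defined commutative associative
addition (encoded via `Option`), a zero, a one, such that `x + 0 = x`,
`x + 1` defined implies `x = 0`, and every element has a unique complement. -/
structure EffectAlgebra (E : Type u) where
  add : E → E → Option E
  zero : E
  one : E
  add_comm' : ∀ x y, add x y = add y x
  add_assoc' : ∀ x y z xy xyz, add x y = some xy → add xy z = some xyz →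
      ∃ yz, add y z = some yz ∧ add x yz = some xyz
  add_zero' : ∀ x, add x zero = some x
  one_max : ∀ x y, add x one = some y → x = zero
  compl_exists : ∀ x, ∃ y, add x y = some one
  compl_unique : ∀ x y₁ y₂, add x y₁ = some one → add x y₂ = some one → y₁ = y₂

namespace EffectAlgebra

variable {E : Type u} (a : EffectAlgebra E)

/-- The natural order: `x ≤ y` iff there is `z` with `x + z = y`. -/
def le (x y : E) : Prop := ∃ z, a.add x z = some y

/-- The complement `x⊥`: the unique element with `x + x⊥ = 1`. -/
noncomputable def compl (x : E) : E := Classical.choose (a.compl_exists x)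

theorem compl_spec (x : E) : a.add x (a.compl x) = some a.one :=
  Classical.choose_spec (a.compl_exists x)

end EffectAlgebra

open CategoryTheory

/-- An effect theory: a category with a designated trivial system `I` such
that each `Eff(A) := Hom(A, I)` is an effect algebra and precomposition
preserves zero and partial sums. -/
structure EffectTheory (C : Type u) [Category.{v} C] where
  I : C
  ea : ∀ A : C, EffectAlgebra (A ⟶ I)
  comp_zero : ∀ {A B : C} (g : B ⟶ A), g ≫ (ea A).zero = (ea B).zero
  comp_add : ∀ {A B : C} (g : B ⟶ A) (p q s : A ⟶ I),
      (ea A).add p q = some s → (ea B).add (g ≫ p) (g ≫ q) = some (g ≫ s)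

namespace EffectTheory

variable {C : Type u} [Category.{v} C] (E : EffectTheory C)

/-- `q` is the image of `f`: the least effect with `q ∘ f = 1 ∘ f`. -/
def IsImage {A B : C} (f : A ⟶ B) (q : B ⟶ E.I) : Prop :=
  f ≫ q = f ≫ (E.ea B).one ∧
    ∀ r : B ⟶ E.I, f ≫ r = f ≫ (E.ea B).one → (E.ea B).le q r

/-- An effect is sharp when it is the image of some map. -/
def Sharp {A : C} (q : A ⟶ E.I) : Prop := ∃ (B : C) (f : B ⟶ A), E.IsImage f q

/-- `π` is a compression for the effect `q`: `1 ∘ π = q ∘ π`, and `π` is final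
with this property. -/
def IsCompression {B A : C} (π : B ⟶ A) (q : A ⟶ E.I) : Prop :=
  π ≫ (E.ea A).one = π ≫ q ∧
    ∀ {D : C} (f : D ⟶ A), f ≫ (E.ea A).one = f ≫ q → ∃! g : D ⟶ B, f = g ≫ π

/-- `ξ` is a filter for the effect `q`: `1 ∘ ξ ≤ q`, and `ξ` is initial with
this property. -/
def IsFilter {A B : C} (ξ : A ⟶ B) (q : A ⟶ E.I) : Prop :=
  (E.ea A).le (ξ ≫ (E.ea B).one) q ∧
    ∀ {D : C} (f : A ⟶ D), (E.ea A).le (f ≫ (E.ea D).one) q → ∃! g : B ⟶ D, f = ξ ≫ g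

/-- A map is pure when it is a filter followed by a compression. -/
def Pure {A B : C} (f : A ⟶ B) : Prop :=
  ∃ (D : C) (q : A ⟶ E.I) (r : B ⟶ E.I) (ξ : A ⟶ D) (π : D ⟶ B),
    E.IsFilter ξ q ∧ E.IsCompression π r ∧ f = ξ ≫ π

end EffectTheory

/-- A pure effect theory (PET): an effect theory in which every effect has a
filter and a compression, every map has an image, the negation of a sharp
effect is sharp, the pure maps form a dagger category, filters and
compressions of sharp effects are adjoint, and compressions of sharp effects
are isometries. -/
structure PET {C : Type u} [Category.{v} C] (E : EffectTheory C) where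
  compObj : ∀ {A : C}, (A ⟶ E.I) → C
  compr : ∀ {A : C} (q : A ⟶ E.I), compObj q ⟶ A
  compr_is : ∀ {A : C} (q : A ⟶ E.I), E.IsCompression (compr q) q
  filtObj : ∀ {A : C}, (A ⟶ E.I) → C
  filt : ∀ {A : C} (q : A ⟶ E.I), A ⟶ filtObj q
  filt_is : ∀ {A : C} (q : A ⟶ E.I), E.IsFilter (filt q) q
  im : ∀ {A B : C}, (A ⟶ B) → (B ⟶ E.I)
  im_is : ∀ {A B : C} (f : A ⟶ B), E.IsImage f (im f)
  dag : ∀ {A B : C}, (A ⟶ B) → (B ⟶ A)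
  pure_id : ∀ A : C, E.Pure (𝟙 A)
  pure_comp : ∀ {A B D : C} (f : A ⟶ B) (g : B ⟶ D), E.Pure f → E.Pure g → E.Pure (f ≫ g)
  pure_dag : ∀ {A B : C} (f : A ⟶ B), E.Pure f → E.Pure (dag f)
  dag_dag : ∀ {A B : C} (f : A ⟶ B), E.Pure f → dag (dag f) = f
  dag_id : ∀ A : C, dag (𝟙 A) = 𝟙 A
  dag_comp : ∀ {A B D : C} (f : A ⟶ B) (g : B ⟶ D), E.Pure f → E.Pure g →
      dag (f ≫ g) = dag g ≫ dag f
  sharp_compl : ∀ {A : C} (q : A ⟶ E.I), E.Sharp q → E.Sharp ((E.ea A).compl q)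
  dag_compr_filt : ∀ {A B : C} (π : B ⟶ A) (q : A ⟶ E.I), E.Sharp q →
      E.IsCompression π q → E.IsFilter (dag π) q
  dag_filt_compr : ∀ {A B : C} (ξ : A ⟶ B) (q : A ⟶ E.I), E.Sharp q →
      E.IsFilter ξ q → E.IsCompression (dag ξ) q
  compr_isometry : ∀ {A B : C} (π : B ⟶ A) (q : A ⟶ E.I), E.Sharp q →
      E.IsCompression π q → π ≫ dag π = 𝟙 B

namespace PET

variable {C : Type u} [Category.{v} C] {E : EffectTheory C} (P : PET E)

/-- The assert map of an effect `p`: `asrt_p := π_p ∘ π_p†`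
(in diagrammatic order, `π_p†` followed by `π_p`). -/
def asrt {A : C} (p : A ⟶ E.I) : A ⟶ A := P.dag (P.compr p) ≫ P.compr p

end PET

/-! Both sides say that `f` lands where `p` holds with certainty, i.e. `f ≫ p = f ≫ 1`: for the
image this is its minimality together with `f ≫ im f = f ≫ 1`, for the assert map it is the
universal property of the compression `π_p`, which `π_p† ≫ π_p` fixes because `π_p ≫ π_p† = id`. -/

namespace EffectAlgebra

variable {E : Type u} (a : EffectAlgebra E)

theorem le_one (x : E) : a.le x a.one := ⟨_, a.compl_spec x⟩

theorem eq_zero_of_add_eq_self {x c : E} (h : a.add x c = some x) : c = a.zero := by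
  have hcx : a.add c x = some x := by rw [a.add_comm']; exact h
  obtain ⟨e, he, hce⟩ := a.add_assoc' c x (a.compl x) x a.one hcx (a.compl_spec x)
  obtain rfl : e = a.one := Option.some.inj (he.symm.trans (a.compl_spec x))
  exact a.one_max c a.one hce

theorem eq_zero_of_add_eq_zero {u v : E} (h : a.add u v = some a.zero) : u = a.zero := by
  have h01 : a.add a.zero a.one = some a.one := by rw [a.add_comm']; exact a.add_zero' a.one
  obtain ⟨d, hvd, hud⟩ := a.add_assoc' u v a.one a.zero a.one h h01
  obtain rfl : v = a.zero := a.one_max v d hvd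
  obtain rfl : d = a.one := Option.some.inj (hvd.symm.trans h01)
  exact a.one_max u a.one hud

theorem le_antisymm {x y : E} (hxy : a.le x y) (hyx : a.le y x) : x = y := by
  obtain ⟨u, hu⟩ := hxy
  obtain ⟨v, hv⟩ := hyx
  obtain ⟨c, huv, hxc⟩ := a.add_assoc' x u v y x hu hv
  obtain rfl : c = a.zero := a.eq_zero_of_add_eq_self hxc
  obtain rfl : u = a.zero := a.eq_zero_of_add_eq_zero huv
  exact Option.some.inj ((a.add_zero' x).symm.trans hu)

end EffectAlgebra

namespace EffectTheory

variable {C : Type u} [Category.{v} C] (E : EffectTheory C)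

theorem comp_le_comp {A B : C} (g : B ⟶ A) {q r : A ⟶ E.I} (h : (E.ea A).le q r) :
    (E.ea B).le (g ≫ q) (g ≫ r) :=
  let ⟨z, hz⟩ := h
  ⟨g ≫ z, E.comp_add g q z r hz⟩

variable {E}

theorem IsImage.le_iff {A B : C} {f : A ⟶ B} {q : B ⟶ E.I} (hf : E.IsImage f q)
    (r : B ⟶ E.I) : (E.ea B).le q r ↔ f ≫ r = f ≫ (E.ea B).one := by
  refine ⟨fun hqr => (E.ea A).le_antisymm ?_ ?_, hf.2 r⟩
  · exact E.comp_le_comp f ((E.ea B).le_one r)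
  · rw [← hf.1]
    exact E.comp_le_comp f hqr

theorem IsCompression.comp_retraction_comp_eq_self_iff {A B D : C} {π : D ⟶ A}
    {q : A ⟶ E.I} (hπ : E.IsCompression π q) {ρ : A ⟶ D} (hρ : π ≫ ρ = 𝟙 D) (f : B ⟶ A) :
    f ≫ ρ ≫ π = f ↔ f ≫ q = f ≫ (E.ea A).one := by
  constructor
  · intro hf
    rw [← hf]
    simp only [Category.assoc, hπ.1]
  · intro hf
    obtain ⟨g, rfl, -⟩ := hπ.2 f hf.symm
    rw [Category.assoc, reassoc_of% hρ]

end EffectTheory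

/-- In a PET, for a sharp effect `p` and any map `f` with
codomain the domain of `asrt_p`: `im(f) ≤ p ↔ asrt_p ∘ f = f`. -/
theorem pet_im_le_iff_asrt_fix {C : Type u} [Category.{v} C] {E : EffectTheory C}
    (P : PET E) {A : C} (p : A ⟶ E.I) (hp : E.Sharp p) {B : C} (f : B ⟶ A) :
    (E.ea A).le (P.im f) p ↔ f ≫ P.asrt p = f :=
  ((P.im_is f).le_iff p).trans
    ((P.compr_is p).comp_retraction_comp_eq_self_iff
      (P.compr_isometry _ p hp (P.compr_is p)) f).symm
end

section
/- In a PET, if p + q is defined and both p and p + q are sharp, then q is sharp. -/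
universe u v

open CategoryTheory

/-! Since `p + q + s⊥ = 1`, the effect `q` is the complement of `p + s⊥`, so it suffices that a
sum of two sharp effects is sharp. For that, `t = p + q` is the image of its compression `π_t`:
given `π_t ≫ r = π_t ≫ 1`, the compressions `π_p` and `π_q` factor through `π_t`, and since
`p` (resp. `q`) is the image of `π_p` (resp. `π_q`) this peels off `r = p + (q + v) = t + v`.
Unitality of compressions of sharp effects comes from the isometry `π ≫ π† = 1` and `π†` being
the filter. -/

namespace EffectAlgebra

variable {E : Type u} (a : EffectAlgebra E)

theorem eq_of_zero_add {y z : E} (h : a.add a.zero y = some z) : z = y :=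
  Option.some.inj (h.symm.trans ((a.add_comm' _ _).trans (a.add_zero' y)))

theorem eq_one_of_one_add {y z : E} (h : a.add a.one y = some z) : z = a.one := by
  have hy : y = a.zero := a.one_max y z ((a.add_comm' y a.one).trans h)
  subst hy
  exact Option.some.inj (h.symm.trans (a.add_zero' a.one))

theorem add_assoc_rev {x y z yz xyz : E} (hyz : a.add y z = some yz)
    (hxyz : a.add x yz = some xyz) : ∃ xy, a.add x y = some xy ∧ a.add xy z = some xyz := by
  obtain ⟨yx, hyx, hzyx⟩ := a.add_assoc' z y x yz xyz ((a.add_comm' z y).trans hyz)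
    ((a.add_comm' yz x).trans hxyz)
  exact ⟨yx, (a.add_comm' x y).trans hyx, (a.add_comm' yx z).trans hzyx⟩

theorem compl_eq_of_add_eq_one {x y : E} (h : a.add x y = some a.one) : a.compl x = y :=
  a.compl_unique x _ y (a.compl_spec x) h

end EffectAlgebra

namespace EffectTheory

variable {C : Type u} [Category.{v} C] (E : EffectTheory C)

theorem comp_eq_one_of_le {A B : C} {x y : A ⟶ E.I} (g : B ⟶ A) (hxy : (E.ea A).le x y)
    (hx : g ≫ x = (E.ea B).one) : g ≫ y = (E.ea B).one := by
  obtain ⟨z, hz⟩ := hxy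
  have hsum := E.comp_add g x z y hz
  rw [hx] at hsum
  exact (E.ea B).eq_one_of_one_add hsum

theorem comp_eq_zero_of_add {A B : C} {x y z : A ⟶ E.I} (g : B ⟶ A)
    (h : (E.ea A).add x y = some z) (hy : g ≫ y = (E.ea B).one) : g ≫ x = (E.ea B).zero := by
  have hsum := E.comp_add g x y z h
  rw [hy] at hsum
  exact (E.ea B).one_max _ _ hsum

theorem comp_eq_of_add_of_comp_eq_zero {A B : C} {x y z : A ⟶ E.I} (g : B ⟶ A)
    (h : (E.ea A).add x y = some z) (hx : g ≫ x = (E.ea B).zero) : g ≫ y = g ≫ z := by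
  have hsum := E.comp_add g x y z h
  rw [hx] at hsum
  exact ((E.ea B).eq_of_zero_add hsum).symm

variable {E}

theorem IsCompression.comp_eq_comp_one {A B D : C} {π : B ⟶ A} {t r : A ⟶ E.I}
    (hπ : E.IsCompression π t) {f : D ⟶ A} (hf : f ≫ (E.ea A).one = f ≫ t)
    (hr : π ≫ r = π ≫ (E.ea A).one) : f ≫ r = f ≫ (E.ea A).one := by
  obtain ⟨g, rfl, -⟩ := hπ.2 f hf
  rw [Category.assoc, hr, Category.assoc]

theorem IsCompression.isImage {A B : C} {π : B ⟶ A} {c : A ⟶ E.I}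
    (hπ : E.IsCompression π c) (hc : E.Sharp c) : E.IsImage π c := by
  obtain ⟨_, f, hfc, hf⟩ := hc
  exact ⟨hπ.1.symm, fun r hr => hf r (hπ.comp_eq_comp_one hfc.symm hr)⟩

end EffectTheory

namespace PET

variable {C : Type u} [Category.{v} C] {E : EffectTheory C}

theorem comp_one_of_isCompression (P : PET E) {A B : C} {π : B ⟶ A} {c : A ⟶ E.I}
    (hc : E.Sharp c) (hπ : E.IsCompression π c) : π ≫ (E.ea A).one = (E.ea B).one := by
  have hπc : π ≫ c = (E.ea B).one := by
    refine E.comp_eq_one_of_le π (P.dag_compr_filt π c hc hπ).1 ?_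
    rw [← Category.assoc, P.compr_isometry π c hc hπ, Category.id_comp]
  exact hπ.1.trans hπc

theorem compr_comp_self (P : PET E) {A : C} {p : A ⟶ E.I} (hp : E.Sharp p) :
    P.compr p ≫ p = (E.ea _).one :=
  (P.compr_is p).1.symm.trans (P.comp_one_of_isCompression hp (P.compr_is p))

theorem compr_comp_eq_of_le (P : PET E) {A : C} {p t r : A ⟶ E.I} (hp : E.Sharp p)
    (hpt : (E.ea A).le p t) (hr : P.compr t ≫ r = P.compr t ≫ (E.ea A).one) :
    P.compr p ≫ r = P.compr p ≫ (E.ea A).one := by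
  refine (P.compr_is t).comp_eq_comp_one ?_ hr
  rw [P.comp_one_of_isCompression hp (P.compr_is p)]
  exact (E.comp_eq_one_of_le _ hpt (P.compr_comp_self hp)).symm

theorem sharp_of_add (P : PET E) {A : C} {p q t : A ⟶ E.I} (h : (E.ea A).add p q = some t)
    (hp : E.Sharp p) (hq : E.Sharp q) : E.Sharp t := by
  refine ⟨_, P.compr t, (P.compr_is t).1.symm, fun r hr => ?_⟩
  obtain ⟨w, hw⟩ := ((P.compr_is p).isImage hp).2 r (P.compr_comp_eq_of_le hp ⟨q, h⟩ hr)
  have hqp : P.compr q ≫ p = (E.ea _).zero := E.comp_eq_zero_of_add _ h (P.compr_comp_self hq)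
  have hqw : P.compr q ≫ w = P.compr q ≫ (E.ea A).one :=
    (E.comp_eq_of_add_of_comp_eq_zero _ hw hqp).trans
      (P.compr_comp_eq_of_le hq ⟨p, ((E.ea A).add_comm' q p).trans h⟩ hr)
  obtain ⟨v, hv⟩ := ((P.compr_is q).isImage hq).2 w hqw
  obtain ⟨t', hpq, ht'⟩ := (E.ea A).add_assoc_rev hv hw
  obtain rfl : t' = t := Option.some.inj (hpq.symm.trans h)
  exact ⟨v, ht'⟩

end PET

/-- In a PET, if `p + q` is defined and both `p` and `p + q`
are sharp, then `q` is sharp. -/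
theorem pet_sharp_of_sharp_add {C : Type u} [Category.{v} C] {E : EffectTheory C}
    (P : PET E) {A : C} (p q s : A ⟶ E.I) (hs : (E.ea A).add p q = some s)
    (hp : E.Sharp p) (hsum : E.Sharp s) :
    E.Sharp q := by
  set a := E.ea A
  obtain ⟨u, hpu, hqu⟩ :=
    a.add_assoc' q p (a.compl s) s a.one ((a.add_comm' q p).trans hs) (a.compl_spec s)
  have hu : E.Sharp u := P.sharp_of_add hpu hp (P.sharp_compl s hsum)
  rw [← a.compl_eq_of_add_eq_one ((a.add_comm' u q).trans hqu)]
  exact P.sharp_compl u hu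
end
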